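/- In type A_5 with simple roots α_1,…,α_5, taking S = Π and T = Π∖{α_3}, the element h = h_{α_1} − h_{α_2} + h_{α_4} − h_{α_5} is nonzero, lies in the span of {h_α : α ∈ S ∩ T}, and satisfies ε_E(h) = 0 for every E ∈ K(S) ∪ K(T). -/

import Mathlib

/-!
Framework: abstract root-system data with a pairing `pair α β = α(h_β)`
(via the Killing form), Dynkin-diagram connectivity, highest roots, and
Kostant's cascade construction `K(S)` as an inductive membership predicate.
-/

namespace CascadePaper

/-- Abstract root-system data: the set of roots `R`, the simple roots,
and the Killing-form pairing `pair α β = α(h_β)`. -/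
structure Setup (k V : Type*) [Field k] [AddCommGroup V] [Module k V] where
  R : Set V
  simple : Set V
  pair : V →ₗ[k] V →ₗ[k] k

variable {k V : Type*} [Field k] [AddCommGroup V] [Module k V]

/-- Adjacency in the Dynkin diagram: distinct roots with nonzero pairing. -/
def Setup.adj (D : Setup k V) (α β : V) : Prop := α ≠ β ∧ D.pair α β ≠ 0

/-- A set of simple roots is connected (in the Dynkin diagram). -/
def Setup.ConnectedIn (D : Setup k V) (S : Set V) : Prop :=
  ∀ α ∈ S, ∀ β ∈ S, Relation.ReflTransGen (fun x y => x ∈ S ∧ y ∈ S ∧ D.adj x y) α β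

/-- `C` is a connected component of `S` (for the Dynkin diagram). -/
def Setup.IsConnComp (D : Setup k V) (S C : Set V) : Prop :=
  C ⊆ S ∧ C.Nonempty ∧ D.ConnectedIn C ∧
    ∀ C' : Set V, C ⊆ C' → C' ⊆ S → D.ConnectedIn C' → C' ⊆ C

/-- `ε` is the highest root of the root subsystem generated by `S`:
it is a root, a nonnegative integral combination of elements of `S`, and it
dominates every root of the subsystem. -/
def Setup.IsHighestRoot (D : Setup k V) (S : Set V) (ε : V) : Prop :=
  ε ∈ D.R ∧ ε ∈ AddSubmonoid.closure S ∧
    ∀ β ∈ D.R, β ∈ AddSubmonoid.closure S → ε - β ∈ AddSubmonoid.closure S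

/-- Kostant's cascade: `InCascade S K` means `K ∈ 𝒦(S)`.  For connected
nonempty `S`, `S ∈ 𝒦(S)` and `𝒦(S) ⊇ 𝒦({α ∈ S | ε_S(h_α) = 0})`; in
general `𝒦(S)` is the union of the cascades of the connected components. -/
inductive Setup.InCascade (D : Setup k V) : Set V → Set V → Prop
  | self (S : Set V) (hne : S.Nonempty) (hconn : D.ConnectedIn S) :
      Setup.InCascade D S S
  | step (S K : Set V) (ε : V) (hconn : D.ConnectedIn S) (hε : D.IsHighestRoot S ε)
      (h : Setup.InCascade D {α ∈ S | D.pair ε α = 0} K) : Setup.InCascade D S K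
  | comp (S C K : Set V) (hC : D.IsConnComp S C) (h : Setup.InCascade D C K) :
      Setup.InCascade D S K

/-- Two roots are strongly orthogonal if neither their sum nor their
difference is a root. -/
def Setup.StronglyOrthogonal (D : Setup k V) (α β : V) : Prop :=
  α + β ∉ D.R ∧ α - β ∉ D.R

/-- The set of highest roots `ε_K`, `K ∈ 𝒦(S)`, of the cascade of `S`. -/
def Setup.cascadeRoots (D : Setup k V) (S : Set V) : Set V :=
  {ε | ∃ K, D.InCascade S K ∧ D.IsHighestRoot K ε}

end CascadePaper

namespace CascadePaper

/-! Concrete model of the root system of type `A_ℓ` inside `ℚ^{ℓ+1}`: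
roots `e_i - e_j` (`i ≠ j`), simple roots `β_i = e_i - e_{i+1}`, and the
standard scalar product as the (normalized Killing) pairing. -/

/-- The standard scalar product on `Fin n → ℚ`, as a bilinear map. -/
noncomputable def dotQ {n : ℕ} : (Fin n → ℚ) →ₗ[ℚ] (Fin n → ℚ) →ₗ[ℚ] ℚ :=
  LinearMap.mk₂ ℚ (fun x y => ∑ i, x i * y i)
    (fun x x' y => by simp [add_mul, Finset.sum_add_distrib])
    (fun c x y => by simp [Finset.mul_sum, mul_assoc])
    (fun x y y' => by simp [mul_add, Finset.sum_add_distrib])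
    (fun c x y => by simp [Finset.mul_sum]; apply Finset.sum_congr rfl; intros; ring)

/-- The standard basis vector `e_i` of `ℚ^{ℓ+1}`. -/
noncomputable def eVec {n : ℕ} (i : Fin n) : Fin n → ℚ := Pi.single i 1

/-- The roots of type `A_ℓ` : `e_i - e_j`, `i ≠ j`. -/
def Aroots (ℓ : ℕ) : Set (Fin (ℓ + 1) → ℚ) :=
  {v | ∃ i j : Fin (ℓ + 1), i ≠ j ∧ v = eVec i - eVec j}

/-- The simple root `β_i = e_i - e_{i+1}` of type `A_ℓ` (0-indexed). -/
noncomputable def betaA (ℓ : ℕ) (i : Fin ℓ) : Fin (ℓ + 1) → ℚ :=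
  eVec i.castSucc - eVec i.succ

/-- The root-system data of type `A_ℓ`. -/
noncomputable def Asetup (ℓ : ℕ) : Setup ℚ (Fin (ℓ + 1) → ℚ) :=
  { R := Aroots ℓ
    simple := Set.range (betaA ℓ)
    pair := dotQ }

/-- The cascade root `ε_i = β_i + β_{i+1} + ⋯ + β_{ℓ+1-i}` of type `A_ℓ`
(here `i` is 0-indexed: `epsA ℓ i = β_{i+1} + ⋯ + β_{ℓ-i}` in the 1-indexed
notation of the paper). -/
noncomputable def epsA (ℓ : ℕ) (i : ℕ) : Fin (ℓ + 1) → ℚ :=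
  ∑ j ∈ Finset.univ.filter (fun j : Fin ℓ => i ≤ (j : ℕ) ∧ (j : ℕ) + i + 1 ≤ ℓ),
    betaA ℓ j

end CascadePaper

/-!
In the coordinates of `ℚ⁶` one has `h = e₀ - 2e₁ + e₂ + e₃ - 2e₄ + e₅`. In type `A`, the cascade
of an interval `β_a, …, β_{b-1}` of simple roots consists of the nested intervals
`β_{a+t}, …, β_{b-1-t}`, whose highest roots are `e_{a+t} - e_{b-t}`: the roots orthogonal to
`e_a - e_b` are exactly the inner ones. The set `T` is the union of the two mutually orthogonal
intervals `{β₀, β₁}` and `{β₃, β₄}`, so its cascade is the union of theirs. Hence the cascade roots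
are `e₀ - e₅, e₁ - e₄, e₂ - e₃` for `S` and `e₀ - e₂, e₃ - e₅` for `T`, and `h` takes equal values
at the two ends of each of them.
-/

namespace CascadePaper

open Relation

lemma map_nonneg_of_mem_closure {M N : Type*} [AddCommMonoid M] [AddCommMonoid N] [PartialOrder N]
    [IsOrderedAddMonoid N] (f : M →+ N) {K : Set M} (hK : ∀ v ∈ K, 0 ≤ f v) {x : M}
    (hx : x ∈ AddSubmonoid.closure K) : 0 ≤ f x := by
  induction hx using AddSubmonoid.closure_induction with
  | mem v hv => exact hK v hv
  | zero => simp
  | add x y _ _ hx hy => simpa using add_nonneg hx hy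

section Cascade

variable {k V : Type*} [Field k] [AddCommGroup V] [Module k V] {D : Setup k V}

def Setup.edgeIn (D : Setup k V) (S : Set V) (x y : V) : Prop :=
  x ∈ S ∧ y ∈ S ∧ D.adj x y

lemma Setup.edgeIn_symm (hD : ∀ x y, D.pair x y = D.pair y x) {S : Set V} {x y : V}
    (h : D.edgeIn S x y) : D.edgeIn S y x :=
  ⟨h.2.1, h.1, h.2.2.1.symm, hD x y ▸ h.2.2.2⟩

lemma Setup.connectedIn_of_forall_reflTransGen (hD : ∀ x y, D.pair x y = D.pair y x)
    {S : Set V} {x₀ : V}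
    (hreach : ∀ y ∈ S, ReflTransGen (D.edgeIn S) x₀ y) : D.ConnectedIn S := by
  have : Std.Symm (D.edgeIn S) := ⟨fun _ _ => D.edgeIn_symm hD⟩
  intro α hα β hβ
  exact (symm (hreach α hα)).trans (hreach β hβ)

lemma Setup.mem_of_reflTransGen_edgeIn {S A : Set V}
    (horth : ∀ x ∈ A, ∀ y ∈ S \ A, D.pair x y = 0) {x y : V}
    (h : ReflTransGen (D.edgeIn S) x y) (hx : x ∈ A) : y ∈ A := by
  induction h with
  | refl => exact hx
  | tail _ hyz ih => exact by_contra fun hz => hyz.2.2.2 (horth _ ih _ ⟨hyz.2.1, hz⟩)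

lemma Setup.IsConnComp.eq_of_connectedIn {S C : Set V} (hC : D.IsConnComp S C)
    (hS : D.ConnectedIn S) : C = S :=
  hC.1.antisymm (hC.2.2.2 S hC.1 subset_rfl hS)

lemma Setup.IsConnComp.eq_left_of_mem {A B C : Set V} (horth : ∀ x ∈ A, ∀ y ∈ B, D.pair x y = 0)
    (hC : D.IsConnComp (A ∪ B) C) (hA : D.ConnectedIn A) {x : V} (hxC : x ∈ C) (hxA : x ∈ A) :
    C = A := by
  have hpath : ∀ y ∈ C, ReflTransGen (D.edgeIn (A ∪ B)) x y := fun y hy =>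
    ReflTransGen.mono (fun _ _ e => ⟨hC.1 e.1, hC.1 e.2.1, e.2.2⟩) _ _ (hC.2.2.1 x hxC y hy)
  have hCA : C ⊆ A := fun y hy =>
    D.mem_of_reflTransGen_edgeIn (fun u hu v hv => horth u hu v (hv.1.resolve_left hv.2))
      (hpath y hy) hxA
  exact hCA.antisymm (hC.2.2.2 A hCA Set.subset_union_left hA)

lemma Setup.IsConnComp.eq_or_eq (hD : ∀ x y, D.pair x y = D.pair y x) {A B C : Set V}
    (horth : ∀ x ∈ A, ∀ y ∈ B, D.pair x y = 0) (hA : D.ConnectedIn A) (hB : D.ConnectedIn B)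
    (hC : D.IsConnComp (A ∪ B) C) : C = A ∨ C = B := by
  obtain ⟨x, hx⟩ := hC.2.1
  rcases hC.1 hx with hxA | hxB
  · exact .inl (hC.eq_left_of_mem horth hA hx hxA)
  · rw [Set.union_comm] at hC
    exact .inr (hC.eq_left_of_mem (fun y hy z hz => hD y z ▸ horth z hz y hy) hB hx hxB)

lemma Setup.not_connectedIn_union {A B : Set V} (horth : ∀ x ∈ A, ∀ y ∈ B, D.pair x y = 0)
    (hdisj : Disjoint A B) (hA : A.Nonempty) (hB : B.Nonempty) : ¬ D.ConnectedIn (A ∪ B) := by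
  obtain ⟨a, ha⟩ := hA
  obtain ⟨b, hb⟩ := hB
  intro hconn
  have hbA : b ∈ A :=
    D.mem_of_reflTransGen_edgeIn (fun x hx y hy => horth x hx y (hy.1.resolve_left hy.2))
      (hconn a (.inl ha) b (.inr hb)) ha
  exact Set.disjoint_left.1 hdisj hbA hb

lemma Setup.inCascade_union (hD : ∀ x y, D.pair x y = D.pair y x) {A B K : Set V}
    (horth : ∀ x ∈ A, ∀ y ∈ B, D.pair x y = 0) (hdisj : Disjoint A B)
    (hA : A.Nonempty) (hB : B.Nonempty) (hA' : D.ConnectedIn A) (hB' : D.ConnectedIn B)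
    (h : D.InCascade (A ∪ B) K) : D.InCascade A K ∨ D.InCascade B K := by
  cases h with
  | self _ _ hconn => exact absurd hconn (D.not_connectedIn_union horth hdisj hA hB)
  | step _ _ _ hconn _ _ => exact absurd hconn (D.not_connectedIn_union horth hdisj hA hB)
  | comp _ C _ hC hK =>
    rcases hC.eq_or_eq hD horth hA' hB' with rfl | rfl
    exacts [.inl hK, .inr hK]

lemma Setup.IsHighestRoot.nonempty (h0 : (0 : V) ∉ D.R) {S : Set V} {ε : V}
    (hε : D.IsHighestRoot S ε) : S.Nonempty := by
  by_contra hS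
  rw [Set.not_nonempty_iff_eq_empty] at hS
  have hε0 := hε.2.1
  rw [hS, AddSubmonoid.closure_empty, AddSubmonoid.mem_bot] at hε0
  exact h0 (hε0 ▸ hε.1)

end Cascade

section TypeA

variable {n ℓ : ℕ}

lemma dotQ_apply (x y : Fin n → ℚ) : dotQ x y = ∑ i, x i * y i := rfl

lemma dotQ_comm (x y : Fin n → ℚ) : dotQ x y = dotQ y x := by
  simp only [dotQ_apply, mul_comm]

lemma dotQ_eVec_left (a : Fin n) (v : Fin n → ℚ) : dotQ (eVec a) v = v a := by
  simp [dotQ_apply, eVec, Pi.single_apply]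

lemma dotQ_eVec_sub_eVec (a b : Fin n) (v : Fin n → ℚ) :
    dotQ (eVec a - eVec b) v = v a - v b := by
  simp [dotQ_eVec_left]

lemma eVec_apply (a c : Fin n) : eVec a c = if c = a then 1 else 0 :=
  Pi.single_apply a 1 c

lemma betaA_apply (i : Fin ℓ) (c : Fin (ℓ + 1)) :
    betaA ℓ i c = (if (c : ℕ) = i then 1 else 0) - (if (c : ℕ) = i + 1 then 1 else 0) := by
  simp [betaA, eVec_apply, Fin.ext_iff]

lemma dotQ_betaA_left (i : Fin ℓ) (v : Fin (ℓ + 1) → ℚ) :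
    dotQ (betaA ℓ i) v = v i.castSucc - v i.succ :=
  dotQ_eVec_sub_eVec _ _ v

lemma betaA_injective : Function.Injective (betaA ℓ) := by
  intro i j h
  have hi := congrFun h i.castSucc
  simp only [betaA_apply, Fin.val_castSucc] at hi
  ext
  split_ifs at hi <;> first | omega | norm_num at hi

lemma zero_notMem_Aroots : (0 : Fin (ℓ + 1) → ℚ) ∉ Aroots ℓ := by
  rintro ⟨i, j, hij, h⟩
  have := congrFun h i
  simp [eVec_apply, hij] at this

lemma Asetup_pair : (Asetup ℓ).pair = dotQ := rfl

lemma Asetup_pair_comm (x y : Fin (ℓ + 1) → ℚ) : (Asetup ℓ).pair x y = (Asetup ℓ).pair y x :=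
  dotQ_comm x y

/-- The simple roots `β_a, …, β_{b-1}`; the bound `b` is exclusive, so that the highest root is
`e_a - e_b`. -/
def simpleInterval (ℓ a b : ℕ) : Set (Fin (ℓ + 1) → ℚ) :=
  betaA ℓ '' {i | a ≤ (i : ℕ) ∧ (i : ℕ) < b}

lemma range_betaA_eq_simpleInterval : Set.range (betaA ℓ) = simpleInterval ℓ 0 ℓ := by
  rw [simpleInterval, ← Set.image_univ]
  congr 1
  ext i
  simp

lemma range_betaA_diff_singleton (c : Fin ℓ) :
    Set.range (betaA ℓ) \ {betaA ℓ c} = simpleInterval ℓ 0 c ∪ simpleInterval ℓ (c + 1) ℓ := by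
  rw [← Set.image_univ, ← Set.image_singleton, ← Set.image_sdiff betaA_injective,
    simpleInterval, simpleInterval, ← Set.image_union]
  congr 1
  ext i
  simp [Fin.ext_iff]

lemma disjoint_simpleInterval {a b c d : ℕ} (hbc : b ≤ c) :
    Disjoint (simpleInterval ℓ a b) (simpleInterval ℓ c d) := by
  rw [simpleInterval, simpleInterval, Set.disjoint_image_iff betaA_injective]
  exact Set.disjoint_left.2 fun i hi hi' => by simp only [Set.mem_ofPred_eq] at hi hi'; omega

lemma dotQ_eq_zero_of_mem_simpleInterval {a b c d : ℕ} (hbc : b < c) {x y : Fin (ℓ + 1) → ℚ}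
    (hx : x ∈ simpleInterval ℓ a b) (hy : y ∈ simpleInterval ℓ c d) : dotQ x y = 0 := by
  obtain ⟨i, hi, rfl⟩ := hx
  obtain ⟨j, hj, rfl⟩ := hy
  simp only [Set.mem_ofPred_eq] at hi hj
  rw [dotQ_betaA_left, betaA_apply, betaA_apply]
  simp only [Fin.val_castSucc, Fin.val_succ]
  split_ifs <;> first | omega | norm_num

lemma adj_betaA_succ {m : ℕ} (hm : m + 1 < ℓ) :
    (Asetup ℓ).adj (betaA ℓ ⟨m, by omega⟩) (betaA ℓ ⟨m + 1, hm⟩) := by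
  refine ⟨betaA_injective.ne (by simp [Fin.ext_iff]), ?_⟩
  rw [Asetup_pair, dotQ_betaA_left, betaA_apply, betaA_apply]
  simp [show m ≠ m + 1 + 1 by omega]

lemma connectedIn_simpleInterval (a b : ℕ) : (Asetup ℓ).ConnectedIn (simpleInterval ℓ a b) := by
  rcases (simpleInterval ℓ a b).eq_empty_or_nonempty with h | ⟨_, ⟨i₀, hi₀, rfl⟩⟩
  · rw [h]
    exact fun _ h => absurd h (Set.notMem_empty _)
  have ha : a < ℓ := by simp only [Set.mem_ofPred_eq] at hi₀; omega
  have hreach : ∀ m, a ≤ m → ∀ (hm : m < ℓ), m < b →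
      ReflTransGen ((Asetup ℓ).edgeIn (simpleInterval ℓ a b)) (betaA ℓ ⟨a, ha⟩)
        (betaA ℓ ⟨m, hm⟩) := by
    intro m ham
    induction m, ham using Nat.le_induction with
    | base => exact fun _ _ => .refl
    | succ m ham ih =>
      intro hm hmb
      refine (ih (by omega) (by omega)).tail ⟨⟨_, ⟨ham, Nat.lt_of_succ_lt hmb⟩, rfl⟩,
        ⟨_, ⟨Nat.le_succ_of_le ham, hmb⟩, rfl⟩, adj_betaA_succ hm⟩
  refine Setup.connectedIn_of_forall_reflTransGen Asetup_pair_comm (x₀ := betaA ℓ ⟨a, ha⟩) ?_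
  rintro _ ⟨i, hi, rfl⟩
  exact hreach i hi.1 i.2 hi.2

/-- `ε - (e_a - e_b)` lies in the cone spanned by `K`, where the `a`-coordinate is `≥ 0` and the
`b`-coordinate is `≤ 0`; for a root `ε = e_i - e_j` this forces `i = a` and `j = b`. -/
lemma eq_eVec_sub_eVec_of_isHighestRoot {K : Set (Fin (ℓ + 1) → ℚ)} {a b : Fin (ℓ + 1)}
    (hab : a ≠ b) (hmem : eVec a - eVec b ∈ AddSubmonoid.closure K)
    (hpos : ∀ v ∈ K, 0 ≤ v a) (hneg : ∀ v ∈ K, v b ≤ 0) {ε : Fin (ℓ + 1) → ℚ} (hε : (Asetup ℓ).IsHighestRoot K ε) :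
    ε = eVec a - eVec b := by
  obtain ⟨⟨i, j, hij, rfl⟩, -, hdom⟩ := hε
  have hsub := hdom _ ⟨a, b, hab, rfl⟩ hmem
  have ha := map_nonneg_of_mem_closure (Pi.evalAddMonoidHom (fun _ => ℚ) a) hpos hsub
  have hb := map_nonneg_of_mem_closure (-Pi.evalAddMonoidHom (fun _ => ℚ) b)
    (fun v hv => by simpa using hneg v hv) hsub
  simp only [Pi.evalAddMonoidHom_apply, AddMonoidHom.neg_apply, Pi.sub_apply, eVec_apply,
    if_neg hab, if_neg hab.symm] at ha hb
  have hai : a = i := by_contra fun h => by split_ifs at ha <;> norm_num at ha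
  have hbj : b = j := by_contra fun h => by split_ifs at hb <;> norm_num at hb
  rw [hai, hbj]

lemma eVec_sub_eVec_mem_closure {a b : Fin (ℓ + 1)} (hab : a < b) :
    eVec a - eVec b ∈ AddSubmonoid.closure (simpleInterval ℓ a b) := by
  obtain ⟨m, hm⟩ := b
  simp only [Fin.lt_def] at hab
  induction m, hab using Nat.le_induction with
  | base => exact AddSubmonoid.subset_closure ⟨⟨a, by omega⟩, ⟨le_rfl, by simp⟩, rfl⟩
  | succ m ham ih =>
    rw [← sub_add_sub_cancel _ (eVec ⟨m, by omega⟩)]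
    refine add_mem (AddSubmonoid.closure_mono ?_ (ih (by omega)))
      (AddSubmonoid.subset_closure ⟨⟨m, by omega⟩, ⟨Nat.le_of_succ_le ham, Nat.lt_add_one m⟩, rfl⟩)
    exact Set.image_mono fun i hi => ⟨hi.1, by simp only [Set.mem_ofPred_eq] at hi ⊢; omega⟩

lemma eq_of_isHighestRoot_simpleInterval {a b : Fin (ℓ + 1)} (hab : a < b)
    {ε : Fin (ℓ + 1) → ℚ} (hε : (Asetup ℓ).IsHighestRoot (simpleInterval ℓ a b) ε) :
    ε = eVec a - eVec b := by
  refine eq_eVec_sub_eVec_of_isHighestRoot hab.ne (eVec_sub_eVec_mem_closure hab) ?_ ?_ hε <;>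
  · rintro _ ⟨i, hi, rfl⟩
    simp only [Set.mem_ofPred_eq] at hi
    rw [betaA_apply]
    split_ifs <;> first | omega | norm_num

/-- For `a ≤ i < b`, the pairing of `e_a - e_b` with `β_i` is `[i = a] + [i + 1 = b]`. -/
lemma setOf_pair_eq_zero_simpleInterval (a b : Fin (ℓ + 1)) :
    {α ∈ simpleInterval ℓ a b | (Asetup ℓ).pair (eVec a - eVec b) α = 0} =
      simpleInterval ℓ (a + 1) (b - 1) := by
  ext v
  constructor
  · rintro ⟨⟨i, hi, rfl⟩, h0⟩
    simp only [Set.mem_ofPred_eq] at hi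
    rw [Asetup_pair, dotQ_eVec_sub_eVec, betaA_apply, betaA_apply] at h0
    refine ⟨i, ?_, rfl⟩
    simp only [Set.mem_ofPred_eq]
    split_ifs at h0 <;> first | omega | norm_num at h0
  · rintro ⟨i, hi, rfl⟩
    simp only [Set.mem_ofPred_eq] at hi
    refine ⟨⟨i, ⟨by omega, by omega⟩, rfl⟩, ?_⟩
    rw [Asetup_pair, dotQ_eVec_sub_eVec, betaA_apply, betaA_apply]
    split_ifs <;> first | omega | norm_num

lemma inCascade_simpleInterval {a b : ℕ} (hb : b ≤ ℓ) {K : Set (Fin (ℓ + 1) → ℚ)}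
    (hK : (Asetup ℓ).InCascade (simpleInterval ℓ a b) K) :
    ∃ i j : Fin (ℓ + 1), a ≤ i ∧ i < j ∧ (i : ℕ) + j = a + b ∧ K = simpleInterval ℓ i j := by
  generalize hX : simpleInterval ℓ a b = X at hK
  induction hK generalizing a b with
  | self X hne _ =>
    subst hX
    obtain ⟨_, ⟨i, hi, rfl⟩⟩ := hne
    simp only [Set.mem_ofPred_eq] at hi
    exact ⟨⟨a, by omega⟩, ⟨b, by omega⟩, le_rfl, Fin.mk_lt_mk.2 (by omega), rfl, rfl⟩
  | step X K ε _ hε _ ih =>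
    subst hX
    obtain ⟨_, ⟨i, hi, rfl⟩⟩ := hε.nonempty zero_notMem_Aroots
    simp only [Set.mem_ofPred_eq] at hi
    obtain rfl := eq_of_isHighestRoot_simpleInterval (a := ⟨a, by omega⟩) (b := ⟨b, by omega⟩)
      (Fin.mk_lt_mk.2 (by omega)) hε
    obtain ⟨i, j, hai, hij, hsum, rfl⟩ :=
      ih (a := a + 1) (b := b - 1) (by omega)
        (setOf_pair_eq_zero_simpleInterval ⟨a, by omega⟩ ⟨b, by omega⟩).symm
    exact ⟨i, j, by omega, hij, by omega, rfl⟩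
  | comp X C K hC _ ih =>
    subst hX
    exact ih hb (hC.eq_of_connectedIn (connectedIn_simpleInterval a b)).symm

lemma simpleInterval_nonempty {a b : ℕ} (hab : a < b) (hb : b ≤ ℓ) :
    (simpleInterval ℓ a b).Nonempty :=
  ⟨_, ⟨⟨a, by omega⟩, ⟨le_rfl, hab⟩, rfl⟩⟩

lemma inCascade_simpleInterval_union {a b c d : ℕ} (hab : a < b) (hbc : b < c) (hcd : c < d)
    (hd : d ≤ ℓ) {K : Set (Fin (ℓ + 1) → ℚ)}
    (hK : (Asetup ℓ).InCascade (simpleInterval ℓ a b ∪ simpleInterval ℓ c d) K) :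
    (Asetup ℓ).InCascade (simpleInterval ℓ a b) K ∨ (Asetup ℓ).InCascade (simpleInterval ℓ c d) K :=
  Setup.inCascade_union Asetup_pair_comm
    (fun _ hx _ hy => dotQ_eq_zero_of_mem_simpleInterval hbc hx hy)
    (disjoint_simpleInterval hbc.le) (simpleInterval_nonempty hab (by omega))
    (simpleInterval_nonempty hcd hd) (connectedIn_simpleInterval a b)
    (connectedIn_simpleInterval c d) hK

lemma pair_eq_zero_of_inCascade_simpleInterval {a b : ℕ} (hb : b ≤ ℓ) {v : Fin (ℓ + 1) → ℚ}
    (hv : ∀ i j : Fin (ℓ + 1), a ≤ i → i < j → (i : ℕ) + j = a + b → v i = v j)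
    {K : Set (Fin (ℓ + 1) → ℚ)} {ε : Fin (ℓ + 1) → ℚ}
    (hK : (Asetup ℓ).InCascade (simpleInterval ℓ a b) K) (hε : (Asetup ℓ).IsHighestRoot K ε) :
    (Asetup ℓ).pair ε v = 0 := by
  obtain ⟨i, j, hai, hij, hsum, rfl⟩ := inCascade_simpleInterval hb hK
  rw [eq_of_isHighestRoot_simpleInterval hij hε, Asetup_pair, dotQ_eVec_sub_eVec,
    hv i j hai hij hsum, sub_self]

end TypeA

/-- In type `A_5` with simple roots `α_1, …, α_5`
(0-indexed `betaA 5 0, …, betaA 5 4`), taking `S = Π` and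
`T = Π ∖ {α_3}`, the element `h = h_{α_1} - h_{α_2} + h_{α_4} - h_{α_5}`
is nonzero, lies in the span of `{h_α : α ∈ S ∩ T}`, and satisfies
`ε_E(h) = 0` for every `E ∈ 𝒦(S) ∪ 𝒦(T)`. -/
theorem counterexample_A5 :
    let D := Asetup 5
    let S : Set (Fin 6 → ℚ) := Set.range (betaA 5)
    let T : Set (Fin 6 → ℚ) := S \ {betaA 5 2}
    let h : Fin 6 → ℚ := betaA 5 0 - betaA 5 1 + betaA 5 3 - betaA 5 4
    h ≠ 0 ∧ h ∈ Submodule.span ℚ (S ∩ T) ∧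
      ∀ (K : Set (Fin 6 → ℚ)) (ε : Fin 6 → ℚ),
        (D.InCascade S K ∨ D.InCascade T K) → D.IsHighestRoot K ε →
          D.pair ε h = 0 := by
  intro D S T h
  have hS : S = simpleInterval 5 0 5 := range_betaA_eq_simpleInterval
  have hT : T = simpleInterval 5 0 2 ∪ simpleInterval 5 3 5 := range_betaA_diff_singleton 2
  have hh : h = ![1, -2, 1, 1, -2, 1] := by
    ext c
    fin_cases c <;> norm_num [h, betaA_apply]
  have hST : ∀ i : Fin 5, i ≠ 2 → betaA 5 i ∈ Submodule.span ℚ (S ∩ T) := fun i hi =>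
    Submodule.subset_span ⟨⟨i, rfl⟩, ⟨i, rfl⟩, betaA_injective.ne hi⟩
  refine ⟨?_, ?_, ?_⟩
  · exact fun h0 => by simpa [hh] using congrFun h0 0
  · exact sub_mem (add_mem (sub_mem (hST 0 (by decide)) (hST 1 (by decide)))
      (hST 3 (by decide))) (hST 4 (by decide))
  rintro K ε (hK | hK) hε
  · rw [hS] at hK
    exact pair_eq_zero_of_inCascade_simpleInterval le_rfl (by rw [hh]; decide) hK hε
  rw [hT] at hK
  rcases inCascade_simpleInterval_union (by norm_num) (by norm_num) (by norm_num) le_rfl hK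
    with hK | hK
  · exact pair_eq_zero_of_inCascade_simpleInterval (by norm_num) (by rw [hh]; decide) hK hε
  · exact pair_eq_zero_of_inCascade_simpleInterval le_rfl (by rw [hh]; decide) hK hε

end CascadePaper
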